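/- arXiv:1903.04157 — 3 statements merged into one kernel-verified Lean document; each statement's English description precedes it below -/
import Mathlib

section
/- If f is convex and L-Lipschitz, then its Gaussian smoothing f_μ satisfies f(x) ≤ f_μ(x) ≤ f(x) + √n · μ · L for all x. -/
/-!
Both bounds are pointwise inequalities integrated against the Gaussian weight. Since the weight
is even, `f_μ(x)` is also the average of `(f(x + μξ) + f(x - μξ)) / 2`, which dominates `f(x)` by
convexity. The Lipschitz bound `f(x + μξ) ≤ f(x) + Lμ‖ξ‖` integrates to `f(x) + Lμ E‖ξ‖`.
-/

open MeasureTheory Set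

section GaussianIntegrability

variable {V : Type*} [NormedAddCommGroup V] [InnerProductSpace ℝ V] [FiniteDimensional ℝ V]
  [MeasurableSpace V] [BorelSpace V]

theorem integrable_exp_neg_mul_sq_norm {b : ℝ} (hb : 0 < b) :
    Integrable (fun v : V => Real.exp (-b * ‖v‖ ^ 2)) := by
  have h := (GaussianFourier.integrable_cexp_neg_mul_sq_norm_add (V := V) (b := (b : ℂ))
    (by simpa using hb) 0 0).norm
  convert h using 2 with v
  simp [Complex.norm_exp, ← Complex.ofReal_pow]

theorem integrable_norm_mul_exp_neg_mul_sq_norm {b : ℝ} (hb : 0 < b) :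
    Integrable (fun v : V => ‖v‖ * Real.exp (-b * ‖v‖ ^ 2)) := by
  refine ((integrable_exp_neg_mul_sq_norm (half_pos hb)).const_mul (Real.exp (1 / (2 * b)))).mono'
    (by fun_prop) (Filter.Eventually.of_forall fun v => ?_)
  set t := ‖v‖
  -- `t ≤ exp t` and `t - b t² ≤ 1 / (2b) - (b / 2) t²`, the latter being `(b t - 1)² ≥ 0`
  have hexp : t * Real.exp (-b * t ^ 2) ≤ Real.exp (t - b * t ^ 2) := by
    rw [sub_eq_add_neg, Real.exp_add, neg_mul]
    exact mul_le_mul_of_nonneg_right ((le_add_of_nonneg_right zero_le_one).trans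
      (Real.add_one_le_exp t)) (Real.exp_pos _).le
  have hquad : t - b * t ^ 2 ≤ 1 / (2 * b) + -(b / 2) * t ^ 2 := by
    have : 0 ≤ (b * t - 1) ^ 2 / (2 * b) := by positivity
    field_simp at this ⊢
    nlinarith
  rw [Real.norm_eq_abs, abs_of_nonneg (by positivity), ← Real.exp_add]
  exact hexp.trans (Real.exp_le_exp.mpr hquad)

end GaussianIntegrability

section WeightedIntegrals

variable {E : Type*} [MeasurableSpace E] {ν : Measure E} {f w : E → ℝ}

/-- Jensen's inequality at the centre of symmetry of an even weight. -/
theorem ConvexOn.mul_integral_le_integral_mul [AddCommGroup E] [Module ℝ E] [MeasurableNeg E]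
    [ν.IsNegInvariant] (hf : ConvexOn ℝ univ f) (hw_nonneg : 0 ≤ w)
    (hw_even : ∀ ξ, w (-ξ) = w ξ) (hw : Integrable w ν)
    (hfw : Integrable (fun ξ => f ξ * w ξ) ν) :
    f 0 * ∫ ξ, w ξ ∂ν ≤ ∫ ξ, f ξ * w ξ ∂ν := by
  have hfw_neg : Integrable (fun ξ => f (-ξ) * w ξ) ν := by
    simpa only [hw_even] using hfw.comp_neg
  have hreflect : ∫ ξ, f (-ξ) * w ξ ∂ν = ∫ ξ, f ξ * w ξ ∂ν := by
    simpa only [hw_even] using integral_neg_eq_self (fun ξ => f ξ * w ξ) ν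
  have hmid (ξ : E) : f 0 * w ξ ≤ (1 / 2) * (f ξ * w ξ) + (1 / 2) * (f (-ξ) * w ξ) := by
    have h := hf.2 (mem_univ ξ) (mem_univ (-ξ)) (by norm_num : (0 : ℝ) ≤ 1 / 2)
      (by norm_num : (0 : ℝ) ≤ 1 / 2) (by norm_num)
    rw [← smul_add, add_neg_cancel, smul_zero, smul_eq_mul, smul_eq_mul] at h
    nlinarith [mul_le_mul_of_nonneg_right h (hw_nonneg ξ)]
  calc f 0 * ∫ ξ, w ξ ∂ν = ∫ ξ, f 0 * w ξ ∂ν := (integral_const_mul _ _).symm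
    _ ≤ ∫ ξ, (1 / 2) * (f ξ * w ξ) + (1 / 2) * (f (-ξ) * w ξ) ∂ν :=
      integral_mono (hw.const_mul _) ((hfw.const_mul _).add (hfw_neg.const_mul _)) hmid
    _ = ∫ ξ, f ξ * w ξ ∂ν := by
      rw [integral_add (hfw.const_mul _) (hfw_neg.const_mul _), integral_const_mul,
        integral_const_mul, hreflect]
      ring

theorem integral_mul_le_of_le_add_mul_norm [SeminormedAddCommGroup E] {K : ℝ}
    (hf : ∀ ξ, f ξ ≤ f 0 + K * ‖ξ‖) (hw_nonneg : 0 ≤ w) (hw : Integrable w ν)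
    (hnw : Integrable (fun ξ => ‖ξ‖ * w ξ) ν) (hfw : Integrable (fun ξ => f ξ * w ξ) ν) :
    ∫ ξ, f ξ * w ξ ∂ν ≤ f 0 * ∫ ξ, w ξ ∂ν + K * ∫ ξ, ‖ξ‖ * w ξ ∂ν := by
  rw [← integral_const_mul, ← integral_const_mul,
    ← integral_add (hw.const_mul _) (hnw.const_mul _)]
  refine integral_mono hfw ((hw.const_mul _).add (hnw.const_mul _)) fun ξ => ?_
  nlinarith [mul_le_mul_of_nonneg_right (hf ξ) (hw_nonneg ξ)]

theorem nonneg_of_mul_integral_eq_one {c : ℝ} (hw_nonneg : 0 ≤ w)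
    (hc : c * ∫ ξ, w ξ ∂ν = 1) : 0 ≤ c :=
  (pos_of_mul_pos_left (hc ▸ one_pos) (integral_nonneg hw_nonneg)).le

variable [NormedAddCommGroup E] [NormedSpace ℝ E] {c μ : ℝ}

theorem ConvexOn.le_mul_integral_comp_add_smul_mul [MeasurableNeg E] [ν.IsNegInvariant]
    (hf : ConvexOn ℝ univ f) (hw_nonneg : 0 ≤ w) (hw_even : ∀ ξ, w (-ξ) = w ξ)
    (hw : Integrable w ν) (hc : c * ∫ ξ, w ξ ∂ν = 1) (x : E)
    (hfw : Integrable (fun ξ => f (x + μ • ξ) * w ξ) ν) :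
    f x ≤ c * ∫ ξ, f (x + μ • ξ) * w ξ ∂ν := by
  have hconv : ConvexOn ℝ univ fun ξ => f (x + μ • ξ) := by
    exact (hf.translate_right x).comp_linearMap (μ • LinearMap.id)
  have h := hconv.mul_integral_le_integral_mul hw_nonneg hw_even hw hfw
  rw [smul_zero, add_zero] at h
  calc f x = c * (f x * ∫ ξ, w ξ ∂ν) := by rw [mul_left_comm, hc, mul_one]
    _ ≤ c * ∫ ξ, f (x + μ • ξ) * w ξ ∂ν :=
      mul_le_mul_of_nonneg_left h (nonneg_of_mul_integral_eq_one hw_nonneg hc)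

theorem mul_integral_comp_add_smul_mul_le {L m : ℝ} (hL : 0 ≤ L) (hμ : 0 ≤ μ)
    (hf : ∀ x y, |f x - f y| ≤ L * ‖x - y‖) (hw_nonneg : 0 ≤ w) (hw : Integrable w ν)
    (hnw : Integrable (fun ξ => ‖ξ‖ * w ξ) ν) (hc : c * ∫ ξ, w ξ ∂ν = 1)
    (hm : c * ∫ ξ, ‖ξ‖ * w ξ ∂ν ≤ m) (x : E)
    (hfw : Integrable (fun ξ => f (x + μ • ξ) * w ξ) ν) :
    c * ∫ ξ, f (x + μ • ξ) * w ξ ∂ν ≤ f x + m * μ * L := by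
  have hgrowth (ξ : E) : f (x + μ • ξ) ≤ f (x + μ • 0) + L * μ * ‖ξ‖ := by
    have h := (abs_le.mp (hf (x + μ • ξ) x)).2
    rw [add_sub_cancel_left, norm_smul, Real.norm_eq_abs, abs_of_nonneg hμ] at h
    rw [smul_zero, add_zero]
    linarith
  have h := integral_mul_le_of_le_add_mul_norm hgrowth hw_nonneg hw hnw hfw
  rw [smul_zero, add_zero] at h
  calc c * ∫ ξ, f (x + μ • ξ) * w ξ ∂ν
      ≤ c * (f x * ∫ ξ, w ξ ∂ν + L * μ * ∫ ξ, ‖ξ‖ * w ξ ∂ν) :=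
        mul_le_mul_of_nonneg_left h (nonneg_of_mul_integral_eq_one hw_nonneg hc)
    _ = f x + L * μ * (c * ∫ ξ, ‖ξ‖ * w ξ ∂ν) := by
        rw [mul_add, mul_left_comm, hc, mul_one, mul_left_comm]
    _ ≤ f x + m * μ * L := by nlinarith [mul_le_mul_of_nonneg_left hm (mul_nonneg hL hμ)]

end WeightedIntegrals

theorem gaussian_smoothing_bounds_general (n : ℕ) (L : ℝ) (hL : 0 ≤ L)
    (f : EuclideanSpace ℝ (Fin n) → ℝ)
    (hconv : ConvexOn ℝ Set.univ f)
    (hLip : ∀ x y : EuclideanSpace ℝ (Fin n), |f x - f y| ≤ L * ‖x - y‖)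
    (μ : ℝ) (hμ : 0 < μ) (κ : ℝ)
    (hint : ∀ x : EuclideanSpace ℝ (Fin n),
      Integrable (fun ξ : EuclideanSpace ℝ (Fin n) => f (x + μ • ξ) * Real.exp (-‖ξ‖ ^ 2 / 2)))
    (hone : (1 / κ) * (∫ ξ : EuclideanSpace ℝ (Fin n), Real.exp (-‖ξ‖ ^ 2 / 2)) = 1)
    (hmoment : (1 / κ) * (∫ ξ : EuclideanSpace ℝ (Fin n), ‖ξ‖ * Real.exp (-‖ξ‖ ^ 2 / 2))
      ≤ Real.sqrt n)
    (fμ : EuclideanSpace ℝ (Fin n) → ℝ)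
    (hfμ : ∀ x, fμ x = (1 / κ) * ∫ ξ : EuclideanSpace ℝ (Fin n),
      f (x + μ • ξ) * Real.exp (-‖ξ‖ ^ 2 / 2)) :
    ∀ x, f x ≤ fμ x ∧ fμ x ≤ f x + Real.sqrt n * μ * L := by
  have hexponent (t : ℝ) : -(1 / 2) * t ^ 2 = -t ^ 2 / 2 := by ring
  have hw : Integrable fun ξ : EuclideanSpace ℝ (Fin n) => Real.exp (-‖ξ‖ ^ 2 / 2) := by
    simpa only [hexponent] using integrable_exp_neg_mul_sq_norm one_half_pos
  have hnw : Integrable fun ξ : EuclideanSpace ℝ (Fin n) => ‖ξ‖ * Real.exp (-‖ξ‖ ^ 2 / 2) := by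
    simpa only [hexponent] using integrable_norm_mul_exp_neg_mul_sq_norm one_half_pos
  have hw_nonneg : 0 ≤ fun ξ : EuclideanSpace ℝ (Fin n) => Real.exp (-‖ξ‖ ^ 2 / 2) :=
    fun _ => (Real.exp_pos _).le
  intro x
  rw [hfμ x]
  exact ⟨hconv.le_mul_integral_comp_add_smul_mul hw_nonneg (fun _ => by rw [norm_neg]) hw hone x
      (hint x),
    mul_integral_comp_add_smul_mul_le hL hμ.le hLip hw_nonneg hw hnw hone hmoment x (hint x)⟩

/-- For a convex `L`-Lipschitz function, the Gaussian smoothing satisfies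
`f(x) ≤ f_μ(x) ≤ f(x) + √n μ L`. -/
theorem gaussian_smoothing_bounds (n : ℕ) (L : ℝ) (hL : 0 ≤ L)
    (f : EuclideanSpace ℝ (Fin n) → ℝ)
    (hconv : ConvexOn ℝ Set.univ f)
    (hLip : ∀ x y : EuclideanSpace ℝ (Fin n), |f x - f y| ≤ L * ‖x - y‖)
    (μ : ℝ) (hμ : 0 < μ) (κ : ℝ) (hκ : κ = (2 * Real.pi) ^ ((n : ℝ) / 2))
    (hint : ∀ x : EuclideanSpace ℝ (Fin n),
      Integrable (fun ξ : EuclideanSpace ℝ (Fin n) => f (x + μ • ξ) * Real.exp (-‖ξ‖ ^ 2 / 2)))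
    (hone : (1 / κ) * (∫ ξ : EuclideanSpace ℝ (Fin n), Real.exp (-‖ξ‖ ^ 2 / 2)) = 1)
    (hmoment : (1 / κ) * (∫ ξ : EuclideanSpace ℝ (Fin n), ‖ξ‖ * Real.exp (-‖ξ‖ ^ 2 / 2))
      ≤ Real.sqrt n)
    (fμ : EuclideanSpace ℝ (Fin n) → ℝ)
    (hfμ : ∀ x, fμ x = (1 / κ) * ∫ ξ : EuclideanSpace ℝ (Fin n),
      f (x + μ • ξ) * Real.exp (-‖ξ‖ ^ 2 / 2)) :
    ∀ x, f x ≤ fμ x ∧ fμ x ≤ f x + Real.sqrt n * μ * L :=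
  gaussian_smoothing_bounds_general n L hL f hconv hLip μ hμ κ hint hone hmoment fμ hfμ
end

section
/- If the Hessian H = ∇²φ and the matrix H(y) + ∇H(y)(y − x) are positive semidefinite for all x, y ∈ X, then the Bregman divergence D_φ(x, ·) is convex in its second argument; in particular, for nonnegative weights θ_j summing to 1, D_φ(x, Σ_j θ_j y_j) ≤ Σ_j θ_j D_φ(x, y_j). -/
/-!
By symmetry of the Hessian, the gradient of `y ↦ D_φ(x, y)` is `∇²φ(y) (y - x)`; by symmetry of
the third derivative, the derivative of that gradient is `H(y) + DH(y)[y - x]`, which is positive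
semidefinite by hypothesis. A function whose gradient has positive semidefinite derivative on a
convex set is convex there, as one sees by restricting it to segments; Jensen's inequality then
gives the finite-sum form.
-/

open Set AffineMap RealInnerProductSpace

theorem ConvexOn.of_comp_lineMap {E : Type*} [AddCommGroup E] [Module ℝ E] {s : Set E} {f : E → ℝ}
    (hs : Convex ℝ s) (h : ∀ y ∈ s, ∀ z ∈ s, ConvexOn ℝ (Icc (0 : ℝ) 1) (f ∘ lineMap y z)) :
    ConvexOn ℝ s f := by
  refine ⟨hs, fun y hy z hz a b ha hb hab => ?_⟩
  have hlin : lineMap y z b = a • y + b • z := by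
    rw [lineMap_apply_module, ← eq_sub_of_add_eq hab]
  simpa [hlin] using (h y hy z hz).2 (x := 0) (y := 1) (by simp) (by simp) ha hb hab

section InnerProductSpace

variable {E : Type*} [NormedAddCommGroup E] [InnerProductSpace ℝ E] [CompleteSpace E]

theorem inner_apply_comm_of_hasGradientAt {φ : E → ℝ} {g : E → E} {H : E →L[ℝ] E} {y : E}
    (hg : ∀ z, HasGradientAt φ (g z) z) (hH : HasFDerivAt g H y) (v w : E) :
    ⟪H v, w⟫ = ⟪H w, v⟫ := by
  have hdual : HasFDerivAt (fun z => InnerProductSpace.toDual ℝ E (g z))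
      ((InnerProductSpace.toDual ℝ E).toContinuousLinearEquiv.toContinuousLinearMap ∘L H) y :=
    (InnerProductSpace.toDual ℝ E).toContinuousLinearEquiv.hasFDerivAt.comp y hH
  simpa using second_derivative_symmetric (fun z => (hg z).hasFDerivAt) hdual v w

def bregmanDiv (φ : E → ℝ) (g : E → E) (x y : E) : ℝ := φ x - φ y - ⟪g y, x - y⟫

theorem hasGradientAt_bregmanDiv {φ : E → ℝ} {g : E → E} {H : E →L[ℝ] E} {x y : E}
    (hg : ∀ z, HasGradientAt φ (g z) z) (hH : HasFDerivAt g H y) :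
    HasGradientAt (bregmanDiv φ g x) (H (y - x)) y := by
  have hinner : HasFDerivAt (fun z => ⟪g z, x - z⟫) _ y :=
    hH.inner ℝ ((hasFDerivAt_const x y).sub (hasFDerivAt_id y))
  refine (((hasFDerivAt_const (φ x) y).sub (hg y).hasFDerivAt).sub hinner).congr_fderiv ?_
  ext v
  simp [inner_apply_comm_of_hasGradientAt hg hH v, inner_sub_left, real_inner_comm]

theorem convexOn_of_hasGradientAt_of_inner_nonneg {s : Set E} {f : E → ℝ} {G : E → E}
    {G' : E → E →L[ℝ] E} (hs : Convex ℝ s) (hf : ∀ y, HasGradientAt f (G y) y)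
    (hG : ∀ y, HasFDerivAt G (G' y) y) (hpos : ∀ y ∈ s, ∀ v, 0 ≤ ⟪G' y v, v⟫) :
    ConvexOn ℝ s f := by
  refine ConvexOn.of_comp_lineMap hs fun y hy z hz => ?_
  have hc (t : ℝ) : HasDerivAt (lineMap y z) (z - y) t := hasDerivAt_lineMap
  have hderiv (t : ℝ) : HasDerivAt (f ∘ lineMap y z) ⟪G (lineMap y z t), z - y⟫ t :=
    (hf _).hasFDerivAt.comp_hasDerivAt t (hc t)
  have hderiv2 (t : ℝ) : HasDerivAt (fun t => ⟪G (lineMap y z t), z - y⟫)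
      ⟪G' (lineMap y z t) (z - y), z - y⟫ t := by
    simpa using ((hG _).comp_hasDerivAt t (hc t)).inner ℝ (hasDerivAt_const t (z - y))
  refine convexOn_of_hasDerivWithinAt2_nonneg (convex_Icc 0 1)
    (fun t _ => (hderiv t).continuousAt.continuousWithinAt)
    (fun t _ => (hderiv t).hasDerivWithinAt) (fun t _ => (hderiv2 t).hasDerivWithinAt) fun t ht => ?_
  rw [interior_Icc] at ht
  exact hpos _ (hs.lineMap_mem hy hz (Ioo_subset_Icc_self ht)) _

end InnerProductSpace

theorem bregman_separately_convex_general (n : ℕ)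
    (X : Set (EuclideanSpace ℝ (Fin n))) (hX : Convex ℝ X)
    (φ : EuclideanSpace ℝ (Fin n) → ℝ)
    (gφ : EuclideanSpace ℝ (Fin n) → EuclideanSpace ℝ (Fin n))
    (hgrad : ∀ x, HasGradientAt φ (gφ x) x)
    (H : EuclideanSpace ℝ (Fin n) → EuclideanSpace ℝ (Fin n) →L[ℝ] EuclideanSpace ℝ (Fin n))
    (hH : ∀ y, HasFDerivAt gφ (H y) y)
    (H' : EuclideanSpace ℝ (Fin n) →
      EuclideanSpace ℝ (Fin n) →L[ℝ] EuclideanSpace ℝ (Fin n) →L[ℝ] EuclideanSpace ℝ (Fin n))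
    (hH' : ∀ y, HasFDerivAt H (H' y) y)
    (hpsd2 : ∀ x ∈ X, ∀ y ∈ X, ∀ v, 0 ≤ ⟪H y v + H' y (y - x) v, v⟫)
    (D : EuclideanSpace ℝ (Fin n) → EuclideanSpace ℝ (Fin n) → ℝ)
    (hD : ∀ x y, D x y = φ x - φ y - ⟪gφ y, x - y⟫) :
    ∀ x ∈ X, ConvexOn ℝ X (fun y => D x y) ∧
      ∀ (N : ℕ) (θ : Fin N → ℝ) (y : Fin N → EuclideanSpace ℝ (Fin n)),
        (∀ j, 0 ≤ θ j) → (∑ j, θ j) = 1 → (∀ j, y j ∈ X) →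
        D x (∑ j, θ j • y j) ≤ ∑ j, θ j * D x (y j) := by
  intro x hx
  have hconv : ConvexOn ℝ X (bregmanDiv φ gφ x) := by
    refine convexOn_of_hasGradientAt_of_inner_nonneg hX
      (fun y => hasGradientAt_bregmanDiv hgrad (hH y))
      (fun y => (hH' y).clm_apply ((hasFDerivAt_id y).sub_const x)) fun y hy v => ?_
    simpa [second_derivative_symmetric hH (hH' y) v] using hpsd2 x hx y hy v
  rw [show D x = bregmanDiv φ gφ x from funext (hD x)]
  exact ⟨hconv, fun N θ y hθ hθ1 hy => by
    simpa using hconv.map_sum_le (fun j _ => hθ j) hθ1 (fun j _ => hy j)⟩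

/-- Separate convexity of the Bregman divergence in its second argument under the
Hessian positivity conditions of Assumption 1. -/
theorem bregman_separately_convex (n : ℕ) (σ : ℝ) (hσ : 0 < σ)
    (X : Set (EuclideanSpace ℝ (Fin n))) (hX : Convex ℝ X)
    (φ : EuclideanSpace ℝ (Fin n) → ℝ)
    (hC3 : ContDiff ℝ 3 φ)
    (gφ : EuclideanSpace ℝ (Fin n) → EuclideanSpace ℝ (Fin n))
    (hgrad : ∀ x, HasGradientAt φ (gφ x) x)
    (hsc : ∀ x y, φ x ≥ φ y + ⟪gφ y, x - y⟫ + σ / 2 * ‖x - y‖ ^ 2)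
    (H : EuclideanSpace ℝ (Fin n) → EuclideanSpace ℝ (Fin n) →L[ℝ] EuclideanSpace ℝ (Fin n))
    (hH : ∀ y, HasFDerivAt gφ (H y) y)
    (H' : EuclideanSpace ℝ (Fin n) →
      EuclideanSpace ℝ (Fin n) →L[ℝ] EuclideanSpace ℝ (Fin n) →L[ℝ] EuclideanSpace ℝ (Fin n))
    (hH' : ∀ y, HasFDerivAt H (H' y) y)
    (hpsd : ∀ y ∈ X, ∀ v, 0 ≤ ⟪H y v, v⟫)
    (hpsd2 : ∀ x ∈ X, ∀ y ∈ X, ∀ v, 0 ≤ ⟪H y v + H' y (y - x) v, v⟫)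
    (D : EuclideanSpace ℝ (Fin n) → EuclideanSpace ℝ (Fin n) → ℝ)
    (hD : ∀ x y, D x y = φ x - φ y - ⟪gφ y, x - y⟫) :
    ∀ x ∈ X, ConvexOn ℝ X (fun y => D x y) ∧
      ∀ (N : ℕ) (θ : Fin N → ℝ) (y : Fin N → EuclideanSpace ℝ (Fin n)),
        (∀ j, 0 ≤ θ j) → (∑ j, θ j) = 1 → (∀ j, y j ∈ X) →
        D x (∑ j, θ j • y j) ≤ ∑ j, θ j * D x (y j) :=
  bregman_separately_convex_general n X hX φ gφ hgrad H hH H' hH' hpsd2 D hD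
end

section
/- Let x⁺ = argmin_{x ∈ X}{ α⟨g, x⟩ + D_φ(x, y) } with φ σ-strongly convex. Then for any x* ∈ X: α⟨g, y − x*⟩ ≤ D_φ(x*, y) − D_φ(x*, x⁺) + (α²/(2σ))‖g‖². -/
open RealInnerProductSpace

/-- Key one-step inequality of mirror descent:
`α⟨g, y - x*⟩ ≤ D_φ(x*,y) - D_φ(x*,x⁺) + α²‖g‖²/(2σ)`. -/
theorem mirror_descent_one_step (n : ℕ) (σ α : ℝ) (hσ : 0 < σ) (hα : 0 < α)
    (X : Set (EuclideanSpace ℝ (Fin n))) (hXc : IsClosed X) (hX : Convex ℝ X)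
    (φ : EuclideanSpace ℝ (Fin n) → ℝ)
    (gφ : EuclideanSpace ℝ (Fin n) → EuclideanSpace ℝ (Fin n))
    (hgrad : ∀ x, HasGradientAt φ (gφ x) x)
    (hsc : ∀ a b, φ a ≥ φ b + ⟪gφ b, a - b⟫ + σ / 2 * ‖a - b‖ ^ 2)
    (D : EuclideanSpace ℝ (Fin n) → EuclideanSpace ℝ (Fin n) → ℝ)
    (hD : ∀ x y, D x y = φ x - φ y - ⟪gφ y, x - y⟫)
    (g y xplus : EuclideanSpace ℝ (Fin n)) (hy : y ∈ X) (hxplus : xplus ∈ X)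
    (hopt : ∀ x ∈ X, 0 ≤ ⟪α • g + gφ xplus - gφ y, x - xplus⟫) :
    ∀ xstar ∈ X,
      α * ⟪g, y - xstar⟫ ≤ D xstar y - D xstar xplus + α ^ 2 / (2 * σ) * ‖g‖ ^ 2 := by
  intro xstar hxstar
  have h1 := hopt xstar hxstar
  have h2 := hsc xplus y
  have h3 : ⟪g, y - xplus⟫ ≤ ‖g‖ * ‖y - xplus‖ := real_inner_le_norm g (y - xplus)
  have hyoung : α * (‖g‖ * ‖y - xplus‖) ≤ α ^ 2 / (2 * σ) * ‖g‖ ^ 2 + σ / 2 * ‖y - xplus‖ ^ 2 := by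
    have h0 : 0 ≤ (α * ‖g‖ - σ * ‖y - xplus‖) ^ 2 := sq_nonneg _
    have hσ' : 0 < 2 * σ := by linarith
    rw [div_mul_eq_mul_div, ← sub_le_iff_le_add, le_div_iff₀ hσ']
    nlinarith [sq_nonneg (α * ‖g‖ - σ * ‖y - xplus‖)]
  have hnrm : ‖xplus - y‖ = ‖y - xplus‖ := norm_sub_rev _ _
  simp only [inner_sub_left, inner_add_left, inner_sub_right, real_inner_smul_left] at h1 h2 h3 ⊢
  rw [hD, hD]
  simp only [inner_sub_left, inner_add_left, inner_sub_right, real_inner_smul_left]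
  rw [hnrm] at h2
  nlinarith [h1, h2, h3, hyoung, mul_le_mul_of_nonneg_left h3 (le_of_lt hα)]
end
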